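/- arXiv:2305.10397 — 4 statements merged into one kernel-verified Lean document; each statement's English description precedes it below -/
import Mathlib

section
/- MCE is convex in its second argument: for a density matrix P, symmetric positive definite matrices Q₁,…,Q_m, and nonnegative weights b₁,…,b_m summing to 1, MCE(P, Σⱼ bⱼ Qⱼ) ≤ Σⱼ bⱼ MCE(P, Qⱼ). -/
open Matrix

/-- The principal matrix logarithm of a symmetric real matrix, via the spectral theorem. -/
noncomputable def matLog {n : ℕ} (A : Matrix (Fin n) (Fin n) ℝ) : Matrix (Fin n) (Fin n) ℝ :=
  if h : A.IsHermitian then h.cfc Real.log else 0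

/-- Matrix cross-entropy `MCE(P, Q) = tr(−P log Q + Q)`. -/
noncomputable def MCE {n : ℕ} (P Q : Matrix (Fin n) (Fin n) ℝ) : ℝ :=
  (-(P * matLog Q) + Q).trace

/-!
Operator concavity of the logarithm, `log (∑ⱼ bⱼ Qⱼ) ⪰ ∑ⱼ bⱼ log Qⱼ`, is available on complex
C⋆-algebras (`CFC.concaveOn_log`); real matrices are carried there by the entrywise embedding
`ℝ → ℂ`, a continuous star-algebra homomorphism and hence compatible with the functional calculus.
The gap `∑ⱼ bⱼ MCE(P, Qⱼ) - MCE(P, ∑ⱼ bⱼ Qⱼ)` equals `tr(P (log (∑ⱼ bⱼ Qⱼ) - ∑ⱼ bⱼ log Qⱼ))`, the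
trace of a product of two positive semidefinite matrices, which is nonnegative.
-/

open scoped MatrixOrder ComplexOrder Matrix.Norms.L2Operator

lemma IsStrictlyPositive.map {F A B : Type*} [Monoid A] [Preorder A] [Zero A] [Monoid B]
    [Preorder B] [Zero B] [FunLike F A B] [MonoidHomClass F A B] [OrderHomClass F A B]
    [ZeroHomClass F A B] (f : F) {a : A} (ha : IsStrictlyPositive a) :
    IsStrictlyPositive (f a) :=
  (ha.isUnit.map f).isStrictlyPositive (map_nonneg f ha.nonneg)

namespace StarAlgHom

variable {R α β ι : Type*} [CommSemiring R] [Semiring α] [Semiring β] [StarRing α] [StarRing β]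
  [Algebra R α] [Algebra R β] [Fintype ι] [DecidableEq ι]

def mapMatrix (f : α →⋆ₐ[R] β) : Matrix ι ι α →⋆ₐ[R] Matrix ι ι β :=
  { f.toAlgHom.mapMatrix with
    map_star' := fun _ => conjTranspose_map f (map_star f) }

@[simp]
lemma mapMatrix_apply (f : α →⋆ₐ[R] β) (A : Matrix ι ι α) : f.mapMatrix A = A.map f := rfl

lemma continuous_mapMatrix [TopologicalSpace α] [TopologicalSpace β] (f : α →⋆ₐ[R] β)
    (hf : Continuous f) : Continuous (f.mapMatrix : Matrix ι ι α → Matrix ι ι β) :=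
  continuous_id.matrix_map hf

end StarAlgHom

namespace Matrix

variable {ι 𝕜 : Type*} [RCLike 𝕜]

lemma convex_setOf_posDef : Convex ℝ {A : Matrix ι ι 𝕜 | A.PosDef} := by
  intro x hx y hy a b ha hb hab
  rcases ha.eq_or_lt with rfl | ha
  · simp_all
  · exact (hx.smul ha).add_posSemidef (hy.posSemidef.smul hb)

lemma PosSemidef.trace_mul_nonneg [Fintype ι] [DecidableEq ι] {A B : Matrix ι ι 𝕜}
    (hA : A.PosSemidef) (hB : B.PosSemidef) : 0 ≤ (A * B).trace := by
  obtain ⟨C, rfl⟩ := CStarAlgebra.nonneg_iff_eq_star_mul_self.mp hA.nonneg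
  rw [mul_assoc, trace_mul_comm]
  exact (hB.mul_mul_conjTranspose_same C).trace_nonneg

end Matrix

lemma matLog_eq_cfc {n : ℕ} {A : Matrix (Fin n) (Fin n) ℝ} (hA : A.IsHermitian) :
    matLog A = cfc Real.log A := by
  rw [matLog, dif_pos hA, hA.cfc_eq]

lemma mapMatrix_ofReal_matLog {n : ℕ} {A : Matrix (Fin n) (Fin n) ℝ} (hA : A.PosDef) :
    (RCLike.ofRealStarAlgHom ℂ).mapMatrix (matLog A)
      = CFC.log ((RCLike.ofRealStarAlgHom ℂ).mapMatrix A) := by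
  rw [matLog_eq_cfc hA.isHermitian]
  refine StarAlgHom.map_cfc _ _ _ ?_ (StarAlgHom.continuous_mapMatrix _ RCLike.continuous_ofReal)
    hA.isHermitian.isSelfAdjoint (hA.isHermitian.isSelfAdjoint.map _)
  exact Real.continuousOn_log.mono fun x hx => (hA.isStrictlyPositive.spectrum_pos hx).ne'

lemma mapMatrix_ofReal_sum_smul_matLog_le {n m : ℕ} {Q : Fin m → Matrix (Fin n) (Fin n) ℝ}
    {b : Fin m → ℝ} (hQ : ∀ j, (Q j).PosDef) (hb : ∀ j, 0 ≤ b j) (hbsum : ∑ j, b j = 1) :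
    (RCLike.ofRealStarAlgHom ℂ).mapMatrix (∑ j, b j • matLog (Q j))
      ≤ (RCLike.ofRealStarAlgHom ℂ).mapMatrix (matLog (∑ j, b j • Q j)) := by
  have hS : (∑ j, b j • Q j).PosDef :=
    (convex_setOf_posDef (𝕜 := ℝ)).sum_mem (fun j _ => hb j) hbsum fun j _ => hQ j
  simp only [map_sum, map_smul, mapMatrix_ofReal_matLog hS, mapMatrix_ofReal_matLog (hQ _)]
  exact CFC.concaveOn_log.le_map_sum (fun j _ => hb j) hbsum
    fun j _ => (hQ j).isStrictlyPositive.map _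

lemma sum_mul_MCE_sub_MCE_sum_smul {n m : ℕ} (P : Matrix (Fin n) (Fin n) ℝ)
    (Q : Fin m → Matrix (Fin n) (Fin n) ℝ) (b : Fin m → ℝ) :
    ∑ j, b j * MCE P (Q j) - MCE P (∑ j, b j • Q j)
      = (P * (matLog (∑ j, b j • Q j) - ∑ j, b j • matLog (Q j))).trace := by
  simp only [MCE, trace_add, trace_neg, trace_sum, trace_smul, mul_sub, Matrix.mul_sum,
    mul_smul_comm, trace_sub, smul_eq_mul, mul_add, Finset.sum_add_distrib, mul_neg,
    Finset.sum_neg_distrib]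
  ring

theorem mce_convex_second_general {n m : ℕ} (P : Matrix (Fin n) (Fin n) ℝ)
    (Q : Fin m → Matrix (Fin n) (Fin n) ℝ) (b : Fin m → ℝ)
    (hPpsd : P.PosSemidef)
    (hQ : ∀ j, (Q j).IsSymm ∧ (Q j).PosDef)
    (hb : ∀ j, 0 ≤ b j) (hbsum : ∑ j, b j = 1) :
    MCE P (∑ j, b j • Q j) ≤ ∑ j, b j * MCE P (Q j) := by
  have hlog := sub_nonneg.mpr (mapMatrix_ofReal_sum_smul_matLog_le (fun j => (hQ j).2) hb hbsum)
  rw [← map_sub] at hlog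
  have htr := (map_nonneg (RCLike.ofRealStarAlgHom ℂ).mapMatrix hPpsd.nonneg).posSemidef
    |>.trace_mul_nonneg hlog.posSemidef
  rw [← map_mul, StarAlgHom.mapMatrix_apply, ← AddMonoidHom.map_trace,
    ← sum_mul_MCE_sub_MCE_sum_smul] at htr
  exact sub_nonneg.mp (Complex.zero_le_real.mp htr)

/-- MCE is convex in its second argument: for a density matrix `P`,
symmetric positive definite matrices `Q₁,…,Q_m` and nonnegative weights `bⱼ` summing to 1,
`MCE(P, Σⱼ bⱼ Qⱼ) ≤ Σⱼ bⱼ MCE(P, Qⱼ)`. -/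
theorem mce_convex_second {n m : ℕ} (P : Matrix (Fin n) (Fin n) ℝ)
    (Q : Fin m → Matrix (Fin n) (Fin n) ℝ) (b : Fin m → ℝ)
    (hPsymm : P.IsSymm) (hPpsd : P.PosSemidef) (hPtr : P.trace = 1)
    (hQ : ∀ j, (Q j).IsSymm ∧ (Q j).PosDef)
    (hb : ∀ j, 0 ≤ b j) (hbsum : ∑ j, b j = 1) :
    MCE P (∑ j, b j • Q j) ≤ ∑ j, b j * MCE P (Q j) :=
  mce_convex_second_general P Q b hPpsd hQ hb hbsum
end

section
/- Lower bound for MCE: if P is a density matrix and Q is symmetric positive definite, then MCE(P,Q) = tr(−P log Q + Q) ≥ −log tr(P Q) + tr(Q). -/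
open Matrix

/-
Diagonalise `Q = U diag(μ) Uᵀ`. For any `f`, `tr(P f(Q)) = ∑ wᵢ f(μᵢ)` with `wᵢ = (Uᵀ P U)ᵢᵢ`,
and since `P` is a density matrix the `wᵢ` are nonnegative and sum to `1`. Hence
`tr(P log Q) ≤ log tr(P Q)` is Jensen's inequality for the concave `log` on the eigenvalues of `Q`.
-/

theorem Real.sum_mul_log_le_log_sum_mul {ι : Type*} (s : Finset ι) {w p : ι → ℝ}
    (hw : ∀ i ∈ s, 0 ≤ w i) (hw₁ : ∑ i ∈ s, w i = 1) (hp : ∀ i ∈ s, 0 < p i) :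
    ∑ i ∈ s, w i * Real.log (p i) ≤ Real.log (∑ i ∈ s, w i * p i) := by
  simpa only [smul_eq_mul] using strictConcaveOn_log_Ioi.concaveOn.le_map_sum hw hw₁ hp

namespace Matrix

variable {n : Type*} [Fintype n]

theorem trace_mul_conj_diagonal {R : Type*} [CommRing R] [StarRing R] [DecidableEq n]
    (P U : Matrix n n R) (d : n → R) :
    (P * (U * diagonal d * star U)).trace = ∑ i, (star U * P * U) i i * d i := by
  rw [show P * (U * diagonal d * star U) = P * U * diagonal d * star U by noncomm_ring,
    trace_mul_cycle, ← mul_assoc]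
  simp only [trace, diag, mul_diagonal]

theorem trace_star_mul_mul_of_mem_unitary {R : Type*} [CommRing R] [StarRing R] [DecidableEq n]
    (P : Matrix n n R) {U : Matrix n n R} (hU : U ∈ unitary (Matrix n n R)) :
    (star U * P * U).trace = P.trace := by
  rw [trace_mul_cycle, Unitary.mul_star_self_of_mem hU, one_mul]

variable [DecidableEq n] {A : Matrix n n ℝ}

theorem IsHermitian.trace_mul_cfc (hA : A.IsHermitian) (P : Matrix n n ℝ) (f : ℝ → ℝ) :
    (P * hA.cfc f).trace = ∑ i,
      (star (hA.eigenvectorUnitary : Matrix n n ℝ) * P * hA.eigenvectorUnitary) i i *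
        f (hA.eigenvalues i) :=
  trace_mul_conj_diagonal _ _ _

theorem IsHermitian.cfc_id (hA : A.IsHermitian) : hA.cfc id = A :=
  hA.spectral_theorem.symm

end Matrix

theorem trace_mul_matLog_le_log_trace_mul {n : ℕ} {P Q : Matrix (Fin n) (Fin n) ℝ}
    (hP : P.PosSemidef) (hPtr : P.trace = 1) (hQ : Q.PosDef) :
    (P * matLog Q).trace ≤ Real.log (P * Q).trace := by
  have hQh := hQ.isHermitian
  set U : Matrix (Fin n) (Fin n) ℝ := hQh.eigenvectorUnitary.val
  have hw : ∀ i ∈ Finset.univ, 0 ≤ (star U * P * U) i i := fun i _ =>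
    (hP.conjTranspose_mul_mul_same U).diag_nonneg
  have hw₁ : ∑ i, (star U * P * U) i i = 1 :=
    (trace_star_mul_mul_of_mem_unitary P hQh.eigenvectorUnitary.2).trans hPtr
  have hlog :
      (P * matLog Q).trace = ∑ i, (star U * P * U) i i * Real.log (hQh.eigenvalues i) := by
    rw [matLog, dif_pos hQh, hQh.trace_mul_cfc]
  have htr : (P * Q).trace = ∑ i, (star U * P * U) i i * hQh.eigenvalues i := by
    conv_lhs => rw [← hQh.cfc_id]
    exact hQh.trace_mul_cfc P id
  rw [hlog, htr]
  exact Real.sum_mul_log_le_log_sum_mul _ hw hw₁ fun i _ => hQ.eigenvalues_pos i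

theorem mce_lower_bound_general {n : ℕ} (P Q : Matrix (Fin n) (Fin n) ℝ)
    (hPpsd : P.PosSemidef) (hPtr : P.trace = 1) (hQpd : Q.PosDef) :
    -Real.log (P * Q).trace + Q.trace ≤ MCE P Q := by
  have hjensen := trace_mul_matLog_le_log_trace_mul hPpsd hPtr hQpd
  rw [MCE, trace_add, trace_neg]
  linarith

/-- Lower bound for MCE: if `P` is a density matrix and `Q` is symmetric
positive definite, then `MCE(P,Q) = tr(−P log Q + Q) ≥ −log tr(P Q) + tr(Q)`. -/
theorem mce_lower_bound {n : ℕ} (P Q : Matrix (Fin n) (Fin n) ℝ)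
    (hPsymm : P.IsSymm) (hPpsd : P.PosSemidef) (hPtr : P.trace = 1)
    (hQsymm : Q.IsSymm) (hQpd : Q.PosDef) :
    -Real.log (P * Q).trace + Q.trace ≤ MCE P Q :=
  mce_lower_bound_general P Q hPpsd hPtr hQpd
end

section
/- Minimization property of the matrix Bregman divergence: for a fixed symmetric positive definite matrix P, the function Q ↦ tr(P log P − P log Q − P + Q) over symmetric positive definite matrices Q is nonnegative and equals zero if and only if Q = P. -/
/-!
Diagonalize `P = U diag(λ) Uᵀ` and `Q = V diag(μ) Vᵀ` and put `W = Uᵀ V`, an orthogonal matrix.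
Then `tr(P log P − P log Q − P + Q) = ∑ᵢⱼ Wᵢⱼ² (λᵢ log λᵢ − λᵢ log μⱼ − λᵢ + μⱼ)`, and each scalar
term equals `μⱼ · klFun (λᵢ / μⱼ)`, which is nonnegative and vanishes only for `λᵢ = μⱼ`.
So the trace is nonnegative, and if it vanishes then `Wᵢⱼ = 0` whenever `λᵢ ≠ μⱼ`, i.e.
`diag(λ) W = W diag(μ)`, which says exactly that `P = Q`.
-/

open Matrix

open Real InformationTheory Unitary

noncomputable def bregmanLog (a b : ℝ) : ℝ := a * log a - a * log b - a + b

lemma bregmanLog_eq_mul_klFun {a b : ℝ} (ha : 0 ≤ a) (hb : 0 < b) :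
    bregmanLog a b = b * klFun (a / b) := by
  rcases ha.eq_or_lt with rfl | ha
  · simp [bregmanLog, klFun]
  rw [bregmanLog, klFun, log_div ha.ne' hb.ne']
  field_simp
  ring

lemma bregmanLog_nonneg {a b : ℝ} (ha : 0 ≤ a) (hb : 0 < b) : 0 ≤ bregmanLog a b := by
  rw [bregmanLog_eq_mul_klFun ha hb]
  exact mul_nonneg hb.le (klFun_nonneg (div_nonneg ha hb.le))

lemma bregmanLog_eq_zero_iff {a b : ℝ} (ha : 0 ≤ a) (hb : 0 < b) :
    bregmanLog a b = 0 ↔ a = b := by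
  rw [bregmanLog_eq_mul_klFun ha hb, mul_eq_zero, klFun_eq_zero_iff (div_nonneg ha hb.le),
    div_eq_one_iff_eq hb.ne', or_iff_right hb.ne']

variable {ι : Type*} [Fintype ι]

lemma conj_diagonal_eq_of_diagonal_mul_eq_mul_diagonal [DecidableEq ι] {R : Type*} [CommRing R]
    [StarRing R] (u v : unitaryGroup ι R) {a b : ι → R}
    (h : diagonal a * (star (u : Matrix ι ι R) * v) = star (u : Matrix ι ι R) * v * diagonal b) :
    conjStarAlgAut R _ u (diagonal a) = conjStarAlgAut R _ v (diagonal b) := by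
  have hv : v = u * (star u * v) := by rw [← mul_assoc, mul_star_self, one_mul]
  have hwb : conjStarAlgAut R _ (star u * v) (diagonal b) = diagonal a := by
    have hw := coe_mul_star_self (star u * v)
    simp only [conjStarAlgAut_apply, Submonoid.coe_mul, coe_star] at hw ⊢
    rw [← h, mul_assoc, hw, mul_one]
  rw [hv, conjStarAlgAut_mul_apply, hwb]

lemma trace_conj_diagonal_mul_conj_diagonal [DecidableEq ι] (u v : unitaryGroup ι ℝ)
    (a b : ι → ℝ) :
    (conjStarAlgAut ℝ _ u (diagonal a) * conjStarAlgAut ℝ _ v (diagonal b)).trace =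
      ∑ i, ∑ j, (star (u : Matrix ι ι ℝ) * v) i j ^ 2 * (a i * b j) := by
  set w : Matrix ι ι ℝ := star (u : Matrix ι ι ℝ) * v
  have : conjStarAlgAut ℝ _ u (diagonal a) * conjStarAlgAut ℝ _ v (diagonal b) =
      u * (diagonal a * w * diagonal b * star w) * star (u : Matrix ι ι ℝ) := by
    simp [w, mul_assoc]
  rw [this, trace_mul_cycle, coe_star_mul_self, one_mul]
  refine Finset.sum_congr rfl fun i _ => ?_
  rw [diag_apply, mul_apply]
  refine Finset.sum_congr rfl fun j _ => ?_
  rw [mul_diagonal, diagonal_mul, star_apply, star_trivial]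
  ring

lemma trace_bregman_eq_sum [DecidableEq ι] {P Q L M : Matrix ι ι ℝ} {u v : unitaryGroup ι ℝ}
    {a b : ι → ℝ}
    (hP : P = conjStarAlgAut ℝ _ u (diagonal a)) (hQ : Q = conjStarAlgAut ℝ _ v (diagonal b))
    (hL : L = conjStarAlgAut ℝ _ u (diagonal (log ∘ a)))
    (hM : M = conjStarAlgAut ℝ _ v (diagonal (log ∘ b))) :
    (P * L - P * M - P + Q).trace =
      ∑ i, ∑ j, (star (u : Matrix ι ι ℝ) * v) i j ^ 2 * bregmanLog (a i) (b j) := by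
  set w : Matrix ι ι ℝ := star (u : Matrix ι ι ℝ) * v
  -- `1 = V diag(1) Vᵀ = U diag(1) Uᵀ` puts every term in the shape of the previous lemma.
  have hPL : (P * L).trace = ∑ i, ∑ j, w i j ^ 2 * (a i * log (a i)) := by
    rw [hP, hL, ← map_mul, diagonal_mul_diagonal]
    simpa using trace_conj_diagonal_mul_conj_diagonal u v (fun i => a i * log (a i)) 1
  have hPM : (P * M).trace = ∑ i, ∑ j, w i j ^ 2 * (a i * log (b j)) := by
    rw [hP, hM, trace_conj_diagonal_mul_conj_diagonal]
    rfl
  have hPtr : P.trace = ∑ i, ∑ j, w i j ^ 2 * a i := by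
    simpa [hP] using trace_conj_diagonal_mul_conj_diagonal u v a 1
  have hQtr : Q.trace = ∑ i, ∑ j, w i j ^ 2 * b j := by
    simpa [hQ] using trace_conj_diagonal_mul_conj_diagonal u v 1 b
  rw [trace_add, trace_sub, trace_sub, hPL, hPM, hPtr, hQtr]
  simp only [← Finset.sum_sub_distrib, ← Finset.sum_add_distrib]
  refine Finset.sum_congr rfl fun i _ => Finset.sum_congr rfl fun j _ => ?_
  rw [bregmanLog]
  ring

lemma sum_sq_mul_bregmanLog_nonneg {a b : ι → ℝ} (ha : ∀ i, 0 ≤ a i) (hb : ∀ j, 0 < b j)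
    (w : Matrix ι ι ℝ) : 0 ≤ ∑ i, ∑ j, w i j ^ 2 * bregmanLog (a i) (b j) :=
  Finset.sum_nonneg fun i _ => Finset.sum_nonneg fun j _ =>
    mul_nonneg (sq_nonneg _) (bregmanLog_nonneg (ha i) (hb j))

lemma diagonal_mul_eq_mul_diagonal_of_sum_sq_mul_bregmanLog_eq_zero [DecidableEq ι]
    {a b : ι → ℝ} (ha : ∀ i, 0 ≤ a i) (hb : ∀ j, 0 < b j) {w : Matrix ι ι ℝ}
    (h : ∑ i, ∑ j, w i j ^ 2 * bregmanLog (a i) (b j) = 0) :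
    diagonal a * w = w * diagonal b := by
  have hterm_nonneg i j : 0 ≤ w i j ^ 2 * bregmanLog (a i) (b j) :=
    mul_nonneg (sq_nonneg _) (bregmanLog_nonneg (ha i) (hb j))
  have hterm i j : w i j ^ 2 * bregmanLog (a i) (b j) = 0 := by
    rw [Finset.sum_eq_zero_iff_of_nonneg fun i _ => Finset.sum_nonneg fun j _ =>
      hterm_nonneg i j] at h
    exact (Finset.sum_eq_zero_iff_of_nonneg fun j _ => hterm_nonneg i j).1
      (h i (Finset.mem_univ i)) j (Finset.mem_univ j)
  ext i j
  rw [diagonal_mul, mul_diagonal]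
  rcases mul_eq_zero.1 (hterm i j) with hw | hab
  · rw [pow_eq_zero_iff two_ne_zero |>.1 hw, mul_zero, zero_mul]
  · rw [(bregmanLog_eq_zero_iff (ha i) (hb j)).1 hab, mul_comm]

lemma Matrix.IsHermitian.eq_conj_diagonal_eigenvalues [DecidableEq ι] {A : Matrix ι ι ℝ}
    (hA : A.IsHermitian) :
    A = conjStarAlgAut ℝ _ hA.eigenvectorUnitary (diagonal hA.eigenvalues) := by
  simpa using hA.spectral_theorem

lemma matLog_eq_conj_diagonal {n : ℕ} {A : Matrix (Fin n) (Fin n) ℝ} (hA : A.IsHermitian) :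
    matLog A = conjStarAlgAut ℝ _ hA.eigenvectorUnitary (diagonal (log ∘ hA.eigenvalues)) := by
  rw [matLog, dif_pos hA, IsHermitian.cfc]
  rfl

theorem bregman_min_general {n : ℕ} (P : Matrix (Fin n) (Fin n) ℝ)
    (hPpd : P.PosDef) :
    ∀ Q : Matrix (Fin n) (Fin n) ℝ, Q.IsSymm → Q.PosDef →
      0 ≤ (P * matLog P - P * matLog Q - P + Q).trace ∧
      ((P * matLog P - P * matLog Q - P + Q).trace = 0 ↔ Q = P) := by
  intro Q _ hQpd
  have hP := hPpd.isHermitian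
  have hQ := hQpd.isHermitian
  have hP_nonneg i : 0 ≤ hP.eigenvalues i := (hPpd.eigenvalues_pos i).le
  have hD := trace_bregman_eq_sum hP.eq_conj_diagonal_eigenvalues hQ.eq_conj_diagonal_eigenvalues
    (matLog_eq_conj_diagonal hP) (matLog_eq_conj_diagonal hQ)
  refine ⟨hD ▸ sum_sq_mul_bregmanLog_nonneg hP_nonneg hQpd.eigenvalues_pos _,
    fun h => ?_, fun hQP => by simp [hQP]⟩
  have hcomm := diagonal_mul_eq_mul_diagonal_of_sum_sq_mul_bregmanLog_eq_zero hP_nonneg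
    hQpd.eigenvalues_pos (hD ▸ h)
  rw [hQ.eq_conj_diagonal_eigenvalues, hP.eq_conj_diagonal_eigenvalues]
  exact (conj_diagonal_eq_of_diagonal_mul_eq_mul_diagonal _ _ hcomm).symm

/-- Minimization property of the matrix Bregman divergence: for a fixed
symmetric positive definite `P`, the function `Q ↦ tr(P log P − P log Q − P + Q)` over
symmetric positive definite matrices `Q` is nonnegative, and equals zero iff `Q = P`. -/
theorem bregman_min {n : ℕ} (P : Matrix (Fin n) (Fin n) ℝ)
    (hPsymm : P.IsSymm) (hPpd : P.PosDef) :
    ∀ Q : Matrix (Fin n) (Fin n) ℝ, Q.IsSymm → Q.PosDef →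
      0 ≤ (P * matLog P - P * matLog Q - P + Q).trace ∧
      ((P * matLog P - P * matLog Q - P + Q).trace = 0 ↔ Q = P) :=
  bregman_min_general P hPpd
end

section
/- One-hot class consistency: under the hypotheses of the one-hot preservation lemma (rows of Z₁ one-hot, rows of Z₂ probability vectors, Z₁Z₁ᵀ = Z₂Z₂ᵀ), two rows i and j of Z₂ are equal (same one-hot class) if and only if rows i and j of Z₁ are equal. -/
open Matrix

/-- A vector in `ℝ^k` is one-hot if some entry is `1` and all others are `0`. -/
def IsOneHot {k : ℕ} (v : Fin k → ℝ) : Prop :=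
  ∃ j, ∀ j', v j' = if j' = j then 1 else 0

/-- A probability vector: nonnegative entries summing to `1`. -/
def IsProbVec {k : ℕ} (v : Fin k → ℝ) : Prop :=
  (∀ j, 0 ≤ v j) ∧ ∑ j, v j = 1

lemma dot_onehot {k : ℕ} {u v : Fin k → ℝ} (hu : IsOneHot u) (hv : IsOneHot v) :
    (∑ c, u c * v c = 1) ↔ ∀ c, u c = v c := by
  obtain ⟨a, ha⟩ := hu
  obtain ⟨b, hb⟩ := hv
  have hsum : ∑ c, u c * v c = if a = b then 1 else 0 := by
    simp only [ha, hb]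
    rw [Finset.sum_eq_single a]
    · simp [eq_comm]
    · intro c _ hc; simp [hc]
    · simp
  constructor
  · intro h c
    rw [hsum] at h
    have hab : a = b := by by_contra hab; simp [hab] at h
    rw [ha, hb, hab]
  · intro h
    have hab : a = b := by
      have := h a
      rw [ha, hb] at this
      simp at this
      by_contra hab
      simp [hab] at this
    rw [hsum, if_pos hab]

lemma prob_sq_onehot {k : ℕ} {v : Fin k → ℝ} (hv : IsProbVec v)
    (hs : ∑ c, v c * v c = 1) : IsOneHot v := by
  obtain ⟨hnn, hsum⟩ := hv
  have hle : ∀ c, v c ≤ 1 := by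
    intro c
    calc v c ≤ ∑ j, v j := Finset.single_le_sum (fun j _ => hnn j) (Finset.mem_univ c)
    _ = 1 := hsum
  have hzero : ∀ c ∈ Finset.univ, v c - v c * v c = 0 := by
    apply (Finset.sum_eq_zero_iff_of_nonneg ?_).mp
    · rw [Finset.sum_sub_distrib, hsum, hs, sub_self]
    · intro c _
      nlinarith [hnn c, hle c]
  have h01 : ∀ c, v c = 0 ∨ v c = 1 := by
    intro c
    have := hzero c (Finset.mem_univ c)
    have : v c * (1 - v c) = 0 := by ring_nf; linarith
    rcases mul_eq_zero.mp this with h | h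
    · left; exact h
    · right; linarith
  have hex : ∃ a, v a = 1 := by
    by_contra h
    push_neg at h
    have : ∀ c ∈ Finset.univ, v c = 0 := by
      intro c _
      rcases h01 c with h0 | h1
      · exact h0
      · exact absurd h1 (h c)
    rw [Finset.sum_eq_zero this] at hsum
    norm_num at hsum
  obtain ⟨a, ha⟩ := hex
  refine ⟨a, fun c => ?_⟩
  by_cases hc : c = a
  · simp [hc, ha]
  · simp only [hc, if_false]
    by_contra h0
    have h1 : v c = 1 := (h01 c).resolve_left h0
    have : (2 : ℝ) ≤ ∑ j, v j := by
      have := Finset.add_sum_erase Finset.univ v (Finset.mem_univ a)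
      have hce : c ∈ Finset.univ.erase a := Finset.mem_erase.mpr ⟨hc, Finset.mem_univ c⟩
      have h2 : v c ≤ ∑ j ∈ Finset.univ.erase a, v j :=
        Finset.single_le_sum (fun j _ => hnn j) hce
      linarith [this, h2]
    linarith [hsum]

/-- One-hot class consistency: if the rows of `Z₁` are one-hot, the rows
of `Z₂` are probability vectors, and `Z₁ Z₁ᵀ = Z₂ Z₂ᵀ`, then rows `i` and `j` of `Z₂` are
equal iff rows `i` and `j` of `Z₁` are equal. -/
theorem one_hot_class_consistency {b k : ℕ} (Z₁ Z₂ : Matrix (Fin b) (Fin k) ℝ)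
    (h₁ : ∀ i, IsOneHot (fun j => Z₁ i j))
    (h₂ : ∀ i, IsProbVec (fun j => Z₂ i j))
    (hR : Z₁ * Z₁ᵀ = Z₂ * Z₂ᵀ) :
    ∀ i j : Fin b, (∀ c, Z₂ i c = Z₂ j c) ↔ (∀ c, Z₁ i c = Z₁ j c) := by
  have hentry : ∀ (Z : Matrix (Fin b) (Fin k) ℝ) (i j : Fin b),
      (Z * Zᵀ) i j = ∑ c, Z i c * Z j c := by
    intro Z i j
    simp [Matrix.mul_apply, Matrix.transpose_apply]
  have honehot2 : ∀ i, IsOneHot (fun j => Z₂ i j) := by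
    intro i
    apply prob_sq_onehot (h₂ i)
    have h1 : (Z₁ * Z₁ᵀ) i i = 1 := by
      rw [hentry]
      exact (dot_onehot (h₁ i) (h₁ i)).mpr (fun c => rfl)
    have := hR ▸ h1
    rw [hentry] at this
    exact this
  intro i j
  have key : (∑ c, Z₁ i c * Z₁ j c) = ∑ c, Z₂ i c * Z₂ j c := by
    have := congrFun (congrFun hR i) j
    rwa [hentry, hentry] at this
  rw [← dot_onehot (honehot2 i) (honehot2 j), ← dot_onehot (h₁ i) (h₁ j), key]
end
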